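/- Let X be a finite set of pairwise distinct admissible parameters and Y a finite multiset of admissible parameters with |X| ≥ |Y|. Then Σ_{ξ∈X} Γ_ξ(Y, X) · τ[X\{ξ}] · σ[ξY] = σ[X] · τ[Y] − δ_{|X|, |Y|} · τ[X] · σ[Y], where ξY is Y with ξ adjoined and δ is the Kronecker delta. -/

import Mathlib

/-!
Write `P_Z = ∏_{η∈Z} (R − η)`, `Q_Z = ∏_{η∈Z} (L − η)` and
`M_Z = tauMatrix l r A B Z = P_Z + B Q_Z A`. Clearing the denominator `det P_Z` turns `τ[Z]` into
`det M_Z` and `σ[Z]` into `⟨a| adj M_Z |β⟩`. The Sylvester equation for `B` makes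
`(R − ξ) M_Z = M_{ξZ} + |β⟩⟨b| Q_Z A` a rank-one perturbation, so after multiplying by
`det P_X · det P_Y`, and with `w = adj M_X |β⟩`, `⟨v| = ⟨a| adj M_Y`, the `ξ`-th summand becomes
`Γ_ξ · (det M_X + ⟨b|(L − ξ)⁻¹ Q_X A w⟩) · ⟨v|(R − ξ)⁻¹|β⟩`.
Since `(R − ξ)⁻¹ |β⟩⟨b| (L − ξ)⁻¹ = B (L − ξ)⁻¹ − (R − ξ)⁻¹ B`, the sum over `ξ` only involves
`Σ_ξ Γ_ξ(Y, X) / (c − ξ) = ∏_Y (c − η) / ∏_X (c − η) − δ`, which is Lagrange interpolation of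
`∏_Y (x − η) − δ ∏_X (x − η)` (of degree `< |X|`) on the nodes `X`. Finally
`M_X w = det M_X · β` collapses the result to `⟨v| M_Y w⟩ − δ det M_X ⟨v|β⟩`.
-/

open Matrix

noncomputable section

/-- The diagonal matrix `∏_{ξ ∈ X} (diagonal d − ξ·1)` for a multiset `X` of parameters. -/
def sProd {n : ℕ} (d : Fin n → ℂ) (X : Multiset ℂ) : Matrix (Fin n) (Fin n) ℂ :=
  Matrix.diagonal fun i => (X.map fun ξ => d i - ξ).prod

/-- The multiset-shifted matrix `A[X] = A·∏_{ξ∈X}(R−ξ)⁻¹`. -/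
def shA {n : ℕ} (r : Fin n → ℂ) (A : Matrix (Fin n) (Fin n) ℂ) (X : Multiset ℂ) :
    Matrix (Fin n) (Fin n) ℂ :=
  A * (sProd r X)⁻¹

/-- The multiset-shifted matrix `B[X] = B·∏_{ξ∈X}(L−ξ)`. -/
def shB {n : ℕ} (l : Fin n → ℂ) (B : Matrix (Fin n) (Fin n) ℂ) (X : Multiset ℂ) :
    Matrix (Fin n) (Fin n) ℂ :=
  B * sProd l X

/-- The shifted tau-function `τ[X] = det(1 + A[X] B[X])`. -/
def shtau {n : ℕ} (l r : Fin n → ℂ) (A B : Matrix (Fin n) (Fin n) ℂ) (X : Multiset ℂ) : ℂ :=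
  (1 + shA r A X * shB l B X).det

/-- The shifted tau-function `σ[X] = τ[X]·⟨a[X]|(1+B[X]A[X])⁻¹|β⟩`. -/
def shsigma {n : ℕ} (l r a β : Fin n → ℂ) (A B : Matrix (Fin n) (Fin n) ℂ)
    (X : Multiset ℂ) : ℂ :=
  shtau l r A B X *
    (Matrix.vecMul (Matrix.vecMul a (sProd r X)⁻¹) (1 + shB l B X * shA r A X)⁻¹ ⬝ᵥ β)

/-- The shifted tau-function `ρ[X] = τ[X]·⟨b[X]|(1+A[X]B[X])⁻¹|α⟩`. -/
def shrho {n : ℕ} (l r b α : Fin n → ℂ) (A B : Matrix (Fin n) (Fin n) ℂ)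
    (X : Multiset ℂ) : ℂ :=
  shtau l r A B X *
    (Matrix.vecMul (Matrix.vecMul b (sProd l X)) (1 + shA r A X * shB l B X)⁻¹ ⬝ᵥ α)

/-- A parameter `ξ` is admissible if `R − ξ·1` and `L − ξ·1` are invertible. -/
def Adm {n : ℕ} (l r : Fin n → ℂ) (ξ : ℂ) : Prop :=
  IsUnit (Matrix.diagonal r - ξ • (1 : Matrix (Fin n) (Fin n) ℂ)) ∧
    IsUnit (Matrix.diagonal l - ξ • (1 : Matrix (Fin n) (Fin n) ℂ))

/-- `Γ_ξ(Y, X) = ∏_{η∈Y}(ξ−η) / ∏_{η∈X, η≠ξ}(ξ−η)`. -/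
def Gam (Y : Multiset ℂ) (X : Finset ℂ) (ξ : ℂ) : ℂ :=
  (Y.map fun η => ξ - η).prod / ∏ η ∈ X.erase ξ, (ξ - η)

open Finset

namespace Matrix

theorem diagonal_sub_smul_one {ι R : Type*} [DecidableEq ι] [Ring R] (d : ι → R) (c : R) :
    diagonal d - c • (1 : Matrix ι ι R) = diagonal fun i => d i - c := by
  rw [← diagonal_one, ← diagonal_smul, diagonal_sub]
  simp

section CommRing

variable {ι R : Type*} [Fintype ι] [DecidableEq ι] [CommRing R]

theorem adjugate_eq_det_smul_inv {C : Matrix ι ι R} (hC : IsUnit C.det) :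
    C.adjugate = C.det • C⁻¹ := by
  rw [inv_def, smul_smul, Ring.mul_inverse_cancel _ hC, one_smul]

theorem det_add_vecMulVec {C : Matrix ι ι R} (hC : IsUnit C.det) (x u : ι → R) :
    (C + vecMulVec x u).det = C.det + u ⬝ᵥ (C.adjugate *ᵥ x) := by
  rw [vecMulVec_eq Unit, det_add_replicateCol_mul_replicateRow hC,
    det_unique (1 + _ : Matrix Unit Unit R), add_apply, one_apply_eq, ← replicateRow_vecMul,
    replicateRow_mul_replicateCol_apply, adjugate_eq_det_smul_inv hC, smul_mulVec,
    dotProduct_smul, dotProduct_mulVec, smul_eq_mul, mul_add, mul_one]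

theorem adjugate_add_vecMulVec_mulVec {E : Matrix ι ι R} {x u : ι → R} (hE : IsUnit E.det)
    (hC : IsUnit (E + vecMulVec x u).det) :
    (E + vecMulVec x u).adjugate *ᵥ x = E.adjugate *ᵥ x := by
  have hCz : (E + vecMulVec x u) *ᵥ (E.adjugate *ᵥ x) = (E + vecMulVec x u).det • x := by
    rw [det_add_vecMulVec hE, add_mulVec, mulVec_mulVec, mul_adjugate, smul_mulVec,
      one_mulVec, vecMulVec_mulVec, op_smul_eq_smul, add_smul]
  have := congrArg ((E + vecMulVec x u).adjugate *ᵥ ·) hCz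
  rw [mulVec_mulVec, adjugate_mul, smul_mulVec, one_mulVec, mulVec_smul] at this
  exact (hC.smul_left_cancel.mp this).symm

theorem inv_mul_sub_mul_mul_inv {P Q B : Matrix ι ι R} (hP : IsUnit P.det)
    (hQ : IsUnit Q.det) :
    P⁻¹ * (P * B - B * Q) * Q⁻¹ = B * Q⁻¹ - P⁻¹ * B := by
  rw [Matrix.mul_sub, Matrix.sub_mul, nonsing_inv_mul_cancel_left P B hP,
    ← Matrix.mul_assoc P⁻¹, mul_nonsing_inv_cancel_right Q _ hQ]

theorem sub_smul_one_mul_sub_mul_sub_smul_one (P Q B : Matrix ι ι R) (c : R) :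
    (P - c • 1) * B - B * (Q - c • 1) = P * B - B * Q := by
  simp only [Matrix.sub_mul, Matrix.mul_sub, Matrix.smul_mul, Matrix.mul_smul, Matrix.one_mul,
    Matrix.mul_one]
  abel

end CommRing

section Field

variable {ι K : Type*} [Fintype ι] [DecidableEq ι] [Field K]

theorem isUnit_diagonal_sub_smul_one_iff {d : ι → K} {c : K} :
    IsUnit (diagonal d - c • (1 : Matrix ι ι K)) ↔ ∀ i, d i ≠ c := by
  simp [diagonal_sub_smul_one, isUnit_diagonal, Pi.isUnit_iff, sub_eq_zero]

theorem inv_diagonal_of_ne_zero {f : ι → K} (hf : ∀ i, f i ≠ 0) :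
    (diagonal f)⁻¹ = diagonal fun i => (f i)⁻¹ := by
  refine inv_eq_left_inv ?_
  rw [diagonal_mul_diagonal, ← diagonal_one]
  exact congrArg diagonal (funext fun i => inv_mul_cancel₀ (hf i))

end Field

end Matrix

section

variable {n : ℕ}

lemma sProd_zero (d : Fin n → ℂ) : sProd d 0 = 1 := by
  simp [sProd]

lemma sProd_cons (d : Fin n → ℂ) (ξ : ℂ) (Z : Multiset ℂ) :
    sProd d (ξ ::ₘ Z) = (diagonal d - ξ • 1) * sProd d Z := by
  simp [sProd, diagonal_sub_smul_one]

lemma isUnit_det_sProd {d : Fin n → ℂ} {Z : Multiset ℂ}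
    (h : ∀ ξ ∈ Z, IsUnit (diagonal d - ξ • (1 : Matrix (Fin n) (Fin n) ℂ))) :
    IsUnit (sProd d Z).det := by
  induction Z using Multiset.induction_on with
  | empty => simp [sProd_zero]
  | cons ξ Z ih =>
    rw [sProd_cons, det_mul]
    exact ((isUnit_iff_isUnit_det _).mp (h ξ (Multiset.mem_cons_self ξ Z))).mul
      (ih fun η hη => h η (Multiset.mem_cons_of_mem hη))

open Polynomial in
theorem degree_prod_X_sub_C_sub_nodal_lt {F : Type*} [Field F] [DecidableEq F] {s : Finset F}
    {t : Multiset F} (hcard : t.card ≤ s.card) :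
    ((t.map fun η => X - C η).prod
      - C (if s.card = t.card then 1 else 0) * Lagrange.nodal s id).degree
      < (s.card : WithBot ℕ) := by
  set p : F[X] := (t.map fun η => X - C η).prod
  have hp : p.Monic := monic_multiset_prod_of_monic _ _ fun η _ => monic_X_sub_C η
  have hpdeg : p.degree = t.card := by
    rw [degree_eq_natDegree hp.ne_zero, natDegree_multiset_prod_X_sub_C_eq_card]
  by_cases hst : s.card = t.card
  · rw [if_pos hst, C_1, one_mul]
    calc (p - Lagrange.nodal s id).degree < p.degree :=
          degree_sub_lt_left (by rw [hpdeg, Lagrange.degree_nodal, hst]) hp.ne_zero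
            (by rw [hp.leadingCoeff, Lagrange.nodal_monic.leadingCoeff])
      _ = s.card := by rw [hpdeg, hst]
  · rw [if_neg hst, C_0, zero_mul, sub_zero, hpdeg]
    exact_mod_cast lt_of_le_of_ne hcard (Ne.symm hst)

open Polynomial in
theorem sum_Gam_div_sub {s : Finset ℂ} {t : Multiset ℂ} (hcard : t.card ≤ s.card) {c : ℂ}
    (hc : c ∉ s) :
    ∑ ξ ∈ s, Gam t s ξ / (c - ξ)
      = (t.map fun η => c - η).prod / ∏ η ∈ s, (c - η) - if s.card = t.card then 1 else 0 := by
  set δ : ℂ := if s.card = t.card then 1 else 0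
  set f : ℂ[X] := (t.map fun η => X - C η).prod - C δ * Lagrange.nodal s id
  have hf_eval : ∀ x, f.eval x
      = (t.map fun η => x - η).prod - δ * ∏ η ∈ s, (x - η) := by
    intro x
    simp [f, eval_multiset_prod, Lagrange.eval_nodal]
  have hdeg : f.degree < s.card := degree_prod_X_sub_C_sub_nodal_lt hcard
  have hcs : ∀ ξ ∈ s, c ≠ id ξ := fun ξ hξ h => hc (h ▸ hξ)
  have hinterp := congrArg (eval c) (Lagrange.eq_interpolate (Set.injOn_id _) hdeg)
  rw [Lagrange.eval_interpolate_not_at_node _ hcs] at hinterp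
  simp only [id_eq, hf_eval, Lagrange.eval_nodal] at hinterp
  have hsum : ∑ ξ ∈ s, Gam t s ξ / (c - ξ) = ∑ ξ ∈ s, Lagrange.nodalWeight s id ξ * (c - ξ)⁻¹
      * ((t.map fun η => ξ - η).prod - δ * ∏ η ∈ s, (ξ - η)) := by
    refine sum_congr rfl fun ξ hξ => ?_
    rw [prod_eq_zero hξ (sub_self ξ), Gam, Lagrange.nodalWeight, prod_inv_distrib]
    simp only [id_eq]
    ring
  have hne : ∏ η ∈ s, (c - η) ≠ 0 :=
    prod_ne_zero_iff.mpr fun η hη => sub_ne_zero.mpr fun h => hc (h ▸ hη)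
  rw [hsum, eq_sub_iff_add_eq, eq_div_iff hne]
  linear_combination -hinterp

theorem sum_Gam_smul_inv_diagonal_sub_smul_one {s : Finset ℂ} {t : Multiset ℂ}
    (hcard : t.card ≤ s.card) {d : Fin n → ℂ}
    (hd : ∀ ξ ∈ s, IsUnit (diagonal d - ξ • (1 : Matrix (Fin n) (Fin n) ℂ))) :
    ∑ ξ ∈ s, Gam t s ξ • (diagonal d - ξ • 1)⁻¹
      = sProd d t * (sProd d s.val)⁻¹ - (if s.card = t.card then 1 else 0 : ℂ) • 1 := by
  have hd' : ∀ ξ ∈ s, ∀ i, d i ≠ ξ := fun ξ hξ =>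
    isUnit_diagonal_sub_smul_one_iff.mp (hd ξ hξ)
  have hs : ∀ i, (s.val.map fun η => d i - η).prod ≠ 0 := fun i =>
    prod_ne_zero_iff.mpr fun η hη => sub_ne_zero.mpr (hd' η hη i)
  rw [sum_congr rfl fun ξ hξ => by rw [diagonal_sub_smul_one,
    inv_diagonal_of_ne_zero fun i => sub_ne_zero.mpr (hd' ξ hξ i)], sProd, sProd,
    inv_diagonal_of_ne_zero hs, diagonal_mul_diagonal]
  ext i j
  by_cases hij : i = j
  · subst hij
    simp only [Matrix.sub_apply, Matrix.smul_apply, one_apply_eq, Matrix.sum_apply,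
      diagonal_apply_eq, smul_eq_mul, mul_one, ← div_eq_mul_inv]
    exact sum_Gam_div_sub hcard fun h => hd' _ h i rfl
  · simp only [Matrix.sub_apply, Matrix.smul_apply, one_apply_ne hij, Matrix.sum_apply,
      diagonal_apply_ne _ hij, smul_eq_mul, mul_zero, sum_const_zero, sub_zero]

def tauMatrix (l r : Fin n → ℂ) (A B : Matrix (Fin n) (Fin n) ℂ) (Z : Multiset ℂ) :
    Matrix (Fin n) (Fin n) ℂ :=
  sProd r Z + B * sProd l Z * A

section tauMatrix

variable {l r a β b : Fin n → ℂ} {A B : Matrix (Fin n) (Fin n) ℂ} {Z : Multiset ℂ}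

lemma one_add_shB_mul_shA (hP : IsUnit (sProd r Z).det) :
    1 + shB l B Z * shA r A Z = tauMatrix l r A B Z * (sProd r Z)⁻¹ := by
  rw [shB, shA, tauMatrix, add_mul, mul_nonsing_inv _ hP]
  simp only [Matrix.mul_assoc]

lemma shtau_mul_det_sProd (hP : IsUnit (sProd r Z).det) :
    shtau l r A B Z * (sProd r Z).det = (tauMatrix l r A B Z).det := by
  rw [shtau, det_one_add_mul_comm, one_add_shB_mul_shA hP, det_mul, det_nonsing_inv, mul_assoc,
    Ring.inverse_mul_cancel _ hP, mul_one]

lemma isUnit_det_tauMatrix (hP : IsUnit (sProd r Z).det)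
    (hi : IsUnit (1 + shA r A Z * shB l B Z)) : IsUnit (tauMatrix l r A B Z).det := by
  rw [← shtau_mul_det_sProd hP]
  exact ((isUnit_iff_isUnit_det _).mp hi).mul hP

lemma shsigma_mul_det_sProd (hP : IsUnit (sProd r Z).det)
    (hi : IsUnit (1 + shA r A Z * shB l B Z)) :
    shsigma l r a β A B Z * (sProd r Z).det = a ⬝ᵥ ((tauMatrix l r A B Z).adjugate *ᵥ β) := by
  rw [shsigma, one_add_shB_mul_shA hP, Matrix.mul_inv_rev, nonsing_inv_nonsing_inv _ hP,
    vecMul_vecMul, ← Matrix.mul_assoc, nonsing_inv_mul _ hP, Matrix.one_mul,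
    adjugate_eq_det_smul_inv (isUnit_det_tauMatrix hP hi), smul_mulVec, dotProduct_smul,
    ← shtau_mul_det_sProd hP, dotProduct_mulVec, smul_eq_mul]
  ring

lemma tauMatrix_cons (hB : diagonal r * B - B * diagonal l = vecMulVec β b) (ξ : ℂ)
    (Z : Multiset ℂ) :
    (diagonal r - ξ • 1) * tauMatrix l r A B Z
      = tauMatrix l r A B (ξ ::ₘ Z) + vecMulVec β (b ᵥ* (sProd l Z * A)) := by
  have hRB : (diagonal r - ξ • 1) * B = B * (diagonal l - ξ • 1) + vecMulVec β b := by
    rw [← hB, ← sub_smul_one_mul_sub_mul_sub_smul_one _ _ _ ξ]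
    abel
  rw [tauMatrix, tauMatrix, sProd_cons, sProd_cons, Matrix.mul_add, add_assoc,
    ← Matrix.mul_assoc, ← Matrix.mul_assoc, hRB, Matrix.add_mul, Matrix.add_mul,
    vecMulVec_mul, vecMulVec_mul, vecMul_vecMul]
  simp only [Matrix.mul_assoc]

lemma shtau_erase_mul_det_sProd (hB : diagonal r * B - B * diagonal l = vecMulVec β b)
    {ξ : ℂ} (hξ : ξ ∈ Z) (hL : IsUnit (diagonal l - ξ • (1 : Matrix (Fin n) (Fin n) ℂ)))
    (hP : IsUnit (sProd r Z).det) (hM : IsUnit (tauMatrix l r A B Z).det) :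
    shtau l r A B (Z.erase ξ) * (sProd r Z).det
      = (tauMatrix l r A B Z).det + b ⬝ᵥ ((diagonal l - ξ • 1)⁻¹ *ᵥ
          ((sProd l Z * A) *ᵥ ((tauMatrix l r A B Z).adjugate *ᵥ β))) := by
  have hZ : ξ ::ₘ Z.erase ξ = Z := Multiset.cons_erase hξ
  have hPZ : sProd r Z = (diagonal r - ξ • 1) * sProd r (Z.erase ξ) := by
    rw [← sProd_cons, hZ]
  have hQ : sProd l (Z.erase ξ) = (diagonal l - ξ • 1)⁻¹ * sProd l Z := by
    conv_rhs => rw [← hZ, sProd_cons]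
    exact (nonsing_inv_mul_cancel_left _ _ ((isUnit_iff_isUnit_det _).mp hL)).symm
  have hPe : IsUnit (sProd r (Z.erase ξ)).det := by
    rw [hPZ, det_mul] at hP
    exact isUnit_of_mul_isUnit_right hP
  calc shtau l r A B (Z.erase ξ) * (sProd r Z).det
      = ((diagonal r - ξ • 1) * tauMatrix l r A B (Z.erase ξ)).det := by
        rw [hPZ, det_mul, det_mul, ← shtau_mul_det_sProd hPe]
        ring
    _ = _ := by
        rw [tauMatrix_cons hB, hZ, det_add_vecMulVec hM, hQ, ← dotProduct_mulVec,
          Matrix.mul_assoc, ← mulVec_mulVec]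

lemma shsigma_cons_mul_det_sProd (hB : diagonal r * B - B * diagonal l = vecMulVec β b)
    {ξ : ℂ} (hR : IsUnit (diagonal r - ξ • (1 : Matrix (Fin n) (Fin n) ℂ)))
    (hP : IsUnit (sProd r Z).det) (hM : IsUnit (tauMatrix l r A B Z).det)
    (hi : IsUnit (1 + shA r A (ξ ::ₘ Z) * shB l B (ξ ::ₘ Z))) :
    shsigma l r a β A B (ξ ::ₘ Z) * (sProd r Z).det
      = (a ᵥ* (tauMatrix l r A B Z).adjugate) ⬝ᵥ ((diagonal r - ξ • 1)⁻¹ *ᵥ β) := by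
  have hRd : IsUnit (diagonal r - ξ • (1 : Matrix (Fin n) (Fin n) ℂ)).det :=
    (isUnit_iff_isUnit_det _).mp hR
  have hPc : IsUnit (sProd r (ξ ::ₘ Z)).det := by
    rw [sProd_cons, det_mul]
    exact hRd.mul hP
  have hC : IsUnit ((diagonal r - ξ • 1) * tauMatrix l r A B Z).det := by
    rw [det_mul]
    exact hRd.mul hM
  have hadj : (tauMatrix l r A B (ξ ::ₘ Z)).adjugate *ᵥ β
      = ((diagonal r - ξ • 1) * tauMatrix l r A B Z).adjugate *ᵥ β := by
    rw [tauMatrix_cons hB] at hC ⊢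
    exact (adjugate_add_vecMulVec_mulVec (isUnit_det_tauMatrix hPc hi) hC).symm
  refine hRd.mul_left_cancel ?_
  calc (diagonal r - ξ • 1).det * (shsigma l r a β A B (ξ ::ₘ Z) * (sProd r Z).det)
      = shsigma l r a β A B (ξ ::ₘ Z) * (sProd r (ξ ::ₘ Z)).det := by
        rw [sProd_cons, det_mul]
        ring
    _ = a ⬝ᵥ ((tauMatrix l r A B Z).adjugate *ᵥ ((diagonal r - ξ • 1).adjugate *ᵥ β)) := by
        rw [shsigma_mul_det_sProd hPc hi, hadj, adjugate_mul_distrib, mulVec_mulVec]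
    _ = _ := by
        rw [adjugate_eq_det_smul_inv hRd, smul_mulVec, mulVec_smul, dotProduct_smul,
          dotProduct_mulVec, smul_eq_mul]

lemma inv_mul_vecMulVec_mul_inv (hB : diagonal r * B - B * diagonal l = vecMulVec β b)
    {ξ : ℂ} (hR : IsUnit (diagonal r - ξ • (1 : Matrix (Fin n) (Fin n) ℂ)))
    (hL : IsUnit (diagonal l - ξ • (1 : Matrix (Fin n) (Fin n) ℂ))) :
    (diagonal r - ξ • 1)⁻¹ * vecMulVec β b * (diagonal l - ξ • 1)⁻¹
      = B * (diagonal l - ξ • 1)⁻¹ - (diagonal r - ξ • 1)⁻¹ * B := by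
  rw [← hB, ← sub_smul_one_mul_sub_mul_sub_smul_one _ _ _ ξ]
  exact inv_mul_sub_mul_mul_inv ((isUnit_iff_isUnit_det _).mp hR)
    ((isUnit_iff_isUnit_det _).mp hL)

theorem sum_Gam_mul_add_dotProduct_mul_dotProduct
    (hB : diagonal r * B - B * diagonal l = vecMulVec β b) {s : Finset ℂ} {t : Multiset ℂ}
    (hcard : t.card ≤ s.card) (hs : ∀ ξ ∈ s, Adm l r ξ)
    (D : ℂ) (v z : Fin n → ℂ) :
    ∑ ξ ∈ s, Gam t s ξ * ((D + b ⬝ᵥ ((diagonal l - ξ • 1)⁻¹ *ᵥ z))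
        * (v ⬝ᵥ ((diagonal r - ξ • 1)⁻¹ *ᵥ β)))
      = v ⬝ᵥ ((D • (sProd r t * (sProd r s.val)⁻¹
              - (if s.card = t.card then 1 else 0 : ℂ) • 1)) *ᵥ β
          + (B * (sProd l t * (sProd l s.val)⁻¹) - sProd r t * (sProd r s.val)⁻¹ * B) *ᵥ z) := by
  have hterm : ∀ ξ ∈ s, Gam t s ξ * ((D + b ⬝ᵥ ((diagonal l - ξ • 1)⁻¹ *ᵥ z))
        * (v ⬝ᵥ ((diagonal r - ξ • 1)⁻¹ *ᵥ β)))
      = v ⬝ᵥ ((D • (Gam t s ξ • (diagonal r - ξ • 1)⁻¹)) *ᵥ β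
          + (B * (Gam t s ξ • (diagonal l - ξ • 1)⁻¹)
            - (Gam t s ξ • (diagonal r - ξ • 1)⁻¹) * B) *ᵥ z) := by
    intro ξ hξ
    rw [Matrix.mul_smul, Matrix.smul_mul, ← smul_sub,
      ← inv_mul_vecMulVec_mul_inv hB (hs ξ hξ).1 (hs ξ hξ).2]
    simp only [smul_mulVec, ← mulVec_mulVec, vecMulVec_mulVec, op_smul_eq_smul, mulVec_smul,
      dotProduct_add, dotProduct_smul, smul_eq_mul]
    ring
  rw [sum_congr rfl hterm, ← dotProduct_sum, sum_add_distrib, ← sum_mulVec, ← sum_mulVec,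
    ← smul_sum, sum_sub_distrib, ← mul_sum, ← sum_mul,
    sum_Gam_smul_inv_diagonal_sub_smul_one hcard fun ξ hξ => (hs ξ hξ).1,
    sum_Gam_smul_inv_diagonal_sub_smul_one hcard fun ξ hξ => (hs ξ hξ).2]
  congr 3
  simp only [Matrix.mul_sub, Matrix.sub_mul, Matrix.mul_smul, Matrix.smul_mul, Matrix.mul_one,
    Matrix.one_mul]
  abel

lemma smul_mulVec_add_mulVec_eq_tauMatrix_mulVec {s t : Multiset ℂ}
    (hPs : IsUnit (sProd r s).det) (hQs : IsUnit (sProd l s).det) {D : ℂ} {w : Fin n → ℂ}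
    (hw : tauMatrix l r A B s *ᵥ w = D • β) (δ : ℂ) :
    (D • (sProd r t * (sProd r s)⁻¹ - δ • 1)) *ᵥ β
        + (B * (sProd l t * (sProd l s)⁻¹) - sProd r t * (sProd r s)⁻¹ * B)
          *ᵥ ((sProd l s * A) *ᵥ w)
      = tauMatrix l r A B t *ᵥ w - (δ * D) • β := by
  have key : sProd r t * (sProd r s)⁻¹ * tauMatrix l r A B s
      + (B * (sProd l t * (sProd l s)⁻¹) - sProd r t * (sProd r s)⁻¹ * B) * (sProd l s * A)
      = tauMatrix l r A B t := by
    have hQ : B * (sProd l t * (sProd l s)⁻¹) * (sProd l s * A) = B * sProd l t * A := by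
      rw [← Matrix.mul_assoc, Matrix.mul_assoc B, nonsing_inv_mul_cancel_right _ _ hQs]
    rw [tauMatrix, tauMatrix, Matrix.mul_add, nonsing_inv_mul_cancel_right _ _ hPs,
      Matrix.sub_mul, hQ]
    simp only [Matrix.mul_assoc]
    abel
  rw [← key, add_mulVec, ← mulVec_mulVec w _ (tauMatrix l r A B s), hw,
    mulVec_mulVec w _ (sProd l s * A)]
  simp only [smul_sub, sub_mulVec, smul_mulVec, mulVec_smul, one_mulVec, smul_smul, mul_comm D]
  abel

end tauMatrix

end

theorem statement15_general {n : ℕ} (l r : Fin n → ℂ)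
    (β a b : Fin n → ℂ)
    (A B : Matrix (Fin n) (Fin n) ℂ)
    (hB : Matrix.diagonal r * B - B * Matrix.diagonal l = Matrix.vecMulVec β b)
    (X : Finset ℂ) (Y : Multiset ℂ)
    (hXadm : ∀ ξ ∈ X, Adm l r ξ) (hYadm : ∀ ξ ∈ Y, Adm l r ξ)
    (hcard : Y.card ≤ X.card)
    (hiX : IsUnit (1 + shA r A X.val * shB l B X.val))
    (hiY : IsUnit (1 + shA r A Y * shB l B Y))
    (hi2 : ∀ ξ ∈ X, IsUnit (1 + shA r A (ξ ::ₘ Y) * shB l B (ξ ::ₘ Y))) :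
    (∑ ξ ∈ X, Gam Y X ξ * shtau l r A B (X.erase ξ).val * shsigma l r a β A B (ξ ::ₘ Y))
      = shsigma l r a β A B X.val * shtau l r A B Y
        - (if X.card = Y.card then (1 : ℂ) else 0)
          * shtau l r A B X.val * shsigma l r a β A B Y := by
  set δ : ℂ := if X.card = Y.card then 1 else 0
  have hPX : IsUnit (sProd r X.val).det := isUnit_det_sProd fun ξ hξ => (hXadm ξ hξ).1
  have hQX : IsUnit (sProd l X.val).det := isUnit_det_sProd fun ξ hξ => (hXadm ξ hξ).2
  have hPY : IsUnit (sProd r Y).det := isUnit_det_sProd fun ξ hξ => (hYadm ξ hξ).1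
  have hMX := isUnit_det_tauMatrix hPX hiX
  have hMY := isUnit_det_tauMatrix hPY hiY
  set MX := tauMatrix l r A B X.val
  set MY := tauMatrix l r A B Y
  set w := MX.adjugate *ᵥ β
  set v := a ᵥ* MY.adjugate
  have hw : MX *ᵥ w = MX.det • β := by rw [mulVec_mulVec, mul_adjugate, smul_mulVec, one_mulVec]
  have hv : v ᵥ* MY = MY.det • a := by rw [vecMul_vecMul, adjugate_mul, vecMul_smul, vecMul_one]
  refine (hPX.mul hPY).mul_right_cancel ?_
  calc (∑ ξ ∈ X, Gam Y X ξ * shtau l r A B (X.erase ξ).val * shsigma l r a β A B (ξ ::ₘ Y))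
        * ((sProd r X.val).det * (sProd r Y).det)
      = ∑ ξ ∈ X, Gam Y X ξ
          * ((MX.det + b ⬝ᵥ ((diagonal l - ξ • 1)⁻¹ *ᵥ ((sProd l X.val * A) *ᵥ w)))
            * (v ⬝ᵥ ((diagonal r - ξ • 1)⁻¹ *ᵥ β))) := by
        rw [sum_mul]
        refine sum_congr rfl fun ξ hξ => ?_
        rw [Finset.erase_val, ← shtau_erase_mul_det_sProd hB hξ (hXadm ξ hξ).2 hPX hMX,
          ← shsigma_cons_mul_det_sProd hB (hXadm ξ hξ).1 hPY hMY (hi2 ξ hξ)]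
        ring
    _ = v ⬝ᵥ (MY *ᵥ w - (δ * MX.det) • β) := by
        rw [sum_Gam_mul_add_dotProduct_mul_dotProduct hB hcard hXadm,
          smul_mulVec_add_mulVec_eq_tauMatrix_mulVec hPX hQX hw]
    _ = MY.det * (a ⬝ᵥ w) - δ * MX.det * (v ⬝ᵥ β) := by
        rw [dotProduct_sub, dotProduct_mulVec, hv, dotProduct_smul, smul_dotProduct, smul_eq_mul,
          smul_eq_mul, mul_assoc]
    _ = _ := by
        rw [← shtau_mul_det_sProd hPX, ← shtau_mul_det_sProd hPY,
          ← shsigma_mul_det_sProd hPX hiX, ← dotProduct_mulVec, ← shsigma_mul_det_sProd hPY hiY]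
        ring

/-- for |X| ≥ |Y|,
`Σ_{ξ∈X} Γ_ξ(Y,X)·τ[X\{ξ}]·σ[ξY] = σ[X]·τ[Y] − δ_{|X|,|Y|}·τ[X]·σ[Y]`. -/
theorem statement15 {n : ℕ} (hn : 1 ≤ n) (l r : Fin n → ℂ)
    (hlr : ∀ j k, l j ≠ r k) (α β a b : Fin n → ℂ)
    (A B : Matrix (Fin n) (Fin n) ℂ)
    (hA : Matrix.diagonal l * A - A * Matrix.diagonal r = Matrix.vecMulVec α a)
    (hB : Matrix.diagonal r * B - B * Matrix.diagonal l = Matrix.vecMulVec β b)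
    (X : Finset ℂ) (Y : Multiset ℂ)
    (hXadm : ∀ ξ ∈ X, Adm l r ξ) (hYadm : ∀ ξ ∈ Y, Adm l r ξ)
    (hcard : Y.card ≤ X.card)
    (hiX : IsUnit (1 + shA r A X.val * shB l B X.val))
    (hiY : IsUnit (1 + shA r A Y * shB l B Y))
    (hi1 : ∀ ξ ∈ X, IsUnit (1 + shA r A (X.erase ξ).val * shB l B (X.erase ξ).val))
    (hi2 : ∀ ξ ∈ X, IsUnit (1 + shA r A (ξ ::ₘ Y) * shB l B (ξ ::ₘ Y))) :
    (∑ ξ ∈ X, Gam Y X ξ * shtau l r A B (X.erase ξ).val * shsigma l r a β A B (ξ ::ₘ Y))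
      = shsigma l r a β A B X.val * shtau l r A B Y
        - (if X.card = Y.card then (1 : ℂ) else 0)
          * shtau l r A B X.val * shsigma l r a β A B Y :=
  statement15_general l r β a b A B hB X Y hXadm hYadm hcard hiX hiY hi2
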